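/- Let A > 0. Define the fourth-root branches ν⁺_A(λ) := e^{iπ/4}·(1/A − λ)^{1/4} (principal fourth root; branch cut [1/A, ∞), ν⁺_A(0) = e^{iπ/4}/A^{1/4}) and ν⁻_A(λ) := (λ + 1/A)^{1/4} (principal fourth root; branch cut (−∞, −1/A], ν⁻_A(0) = 1/A^{1/4}). Then E_A has singularities of order exactly 1/4 at the branch points ±1/A, with: (i) E_A(λ) = (e^{3πi/4}/(√2·(2A)^{1/4}·ν⁺_A(λ)))·[[1,1],[1,1]] + O(|λ − 1/A|^{1/4}) as λ → 1/A within ℂ ∖ Σ_A; and (ii) E_A(λ) = (i/(√2·(2A)^{1/4}·ν⁻_A(λ)))·[[−1,1],[1,−1]] + O(|λ + 1/A|^{1/4}) as λ → −1/A within ℂ ∖ Σ_A. -/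

import Mathlib

/-!
Put `q = A·√((1/A - λ)(1/A + λ))`. Then `i·A·k_A(λ) = -q`, off the cut `Re q > 0`, and
`E_A = (i/√2)·(√(1+q)/√q)·[[d, 1], [1, d]]` with `d = λA/(1+q)`. Near `1/A` the root `√q` splits
as `γ·η` with `η = (1/A - λ)^{1/4}` and `γ = (A²(1/A + λ))^{1/4} → a = (2A)^{1/4}`: this is the one
place where the branches have to be tracked. The remainders `coeff - i/(√2 a η)` and
`coeff·d - i/(√2 a η)` are then `η` times expressions in `γ`, `η`, `√(1+q)` with finite limits,
hence `O(|λ - 1/A|^{1/4})`. The point `-1/A` follows from `k_A(-λ) = k_A(λ)`, which only flips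
the sign of `d`.
-/

open Complex Matrix MeasureTheory Filter

noncomputable def csqrt (z : ℂ) : ℂ := z ^ (1/2 : ℂ)

noncomputable def sB (w : ℂ) : ℂ := Complex.I * csqrt (-w)

def SigmaSet (A : ℝ) : Set ℂ := Complex.ofReal '' (Set.Iic (-(1/A)) ∪ Set.Ici (1/A))

noncomputable def kA (A : ℝ) (l : ℂ) : ℂ := Complex.I * csqrt (1/(A:ℂ)^2 - l^2)

noncomputable def DA (A : ℝ) (l : ℂ) : Matrix (Fin 2) (Fin 2) ℂ :=
  (((Real.sqrt 2 : ℝ) : ℂ)⁻¹ * sB (1/(Complex.I * (A:ℂ) * kA A l) - 1)) •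
    !![l * (A:ℂ) / (1 - Complex.I * (A:ℂ) * kA A l), -1;
       -1, l * (A:ℂ) / (1 - Complex.I * (A:ℂ) * kA A l)]

noncomputable def EA (A : ℝ) (l : ℂ) : Matrix (Fin 2) (Fin 2) ℂ :=
  (((Real.sqrt 2 : ℝ) : ℂ)⁻¹ * sB (1/(Complex.I * (A:ℂ) * kA A l) - 1)) •
    !![l * (A:ℂ) / (1 - Complex.I * (A:ℂ) * kA A l), 1;
       1, l * (A:ℂ) / (1 - Complex.I * (A:ℂ) * kA A l)]

def sigma1 : Matrix (Fin 2) (Fin 2) ℂ := !![0, 1; 1, 0]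
def sigma2 : Matrix (Fin 2) (Fin 2) ℂ := !![0, -Complex.I; Complex.I, 0]
def sigma3 : Matrix (Fin 2) (Fin 2) ℂ := !![1, 0; 0, -1]

attribute [local instance] Matrix.normedAddCommGroup Matrix.normedSpace

/-- ν⁺: fourth-root branch with branch cut [1/A, ∞), ν⁺(0) = e^{iπ/4}/A^{1/4}. -/
noncomputable def nuPlus (A : ℝ) (l : ℂ) : ℂ :=
  Complex.exp ((Real.pi : ℂ) * Complex.I / 4) * ((1/(A:ℂ) - l) ^ (1/4 : ℂ))

/-- ν⁻: fourth-root branch with branch cut (−∞, −1/A], ν⁻(0) = 1/A^{1/4}. -/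
noncomputable def nuMinus (A : ℝ) (l : ℂ) : ℂ := (l + 1/(A:ℂ)) ^ (1/4 : ℂ)

open Asymptotics Topology Set
open scoped Real

lemma isBigO_of_eventuallyEq_mul {α 𝕜 : Type*} [NormedField 𝕜] {l : Filter α} {f η N : α → 𝕜}
    {L : 𝕜} (hf : ∀ᶠ x in l, f x = η x * N x) (hN : Tendsto N l (𝓝 L)) : f =O[l] η := by
  have h := (isBigO_refl η l).mul (hN.isBigO_one 𝕜)
  simp only [mul_one] at h
  exact EventuallyEq.trans_isBigO hf h

lemma arg_add_arg_mem_Ioc {z w : ℂ} (hz : 0 < z.re) (hw : w ∈ slitPlane)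
    (h : z.im * w.im ≤ 0) : z.arg + w.arg ∈ Ioc (-π) π := by
  obtain ⟨hz1, hz2⟩ := abs_lt.mp (abs_arg_lt_pi_div_two_iff.mpr (Or.inl hz))
  have hw1 := neg_pi_lt_arg w
  have hw2 := arg_le_pi w
  rcases lt_trichotomy w.im 0 with hw0 | hw0 | hw0
  · have : 0 ≤ z.arg := arg_nonneg_iff.mpr (by nlinarith)
    have : w.arg < 0 := arg_neg_iff.mpr hw0
    constructor <;> linarith
  · have : w.arg = 0 := arg_eq_zero_iff.mpr
      ⟨((mem_slitPlane_iff.mp hw).resolve_right (not_not.mpr hw0)).le, hw0⟩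
    constructor <;> linarith
  · have : z.arg ≤ 0 := by
      rcases (show z.im ≤ 0 by nlinarith).lt_or_eq with hz0 | hz0
      · exact (arg_neg_iff.mpr hz0).le
      · exact (arg_eq_zero_iff.mpr ⟨hz.le, hz0⟩).le
    have : 0 ≤ w.arg := arg_nonneg_iff.mpr hw0.le
    constructor <;> linarith

lemma mul_cpow_of_arg_add_mem {x y : ℂ} (hx : x ≠ 0) (hy : y ≠ 0)
    (h : x.arg + y.arg ∈ Ioc (-π) π) (w : ℂ) : (x * y) ^ w = x ^ w * y ^ w := by
  rw [cpow_def_of_ne_zero (mul_ne_zero hx hy), cpow_def_of_ne_zero hx, cpow_def_of_ne_zero hy,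
    log_mul hx hy h, add_mul, exp_add]

lemma cpow_one_div_four_pow_four (x : ℂ) : (x ^ (1/4 : ℂ)) ^ 4 = x := by
  simp

lemma csqrt_sq (x : ℂ) : csqrt x ^ 2 = x := by
  simp [csqrt]

lemma csqrt_csqrt (x : ℂ) : csqrt (csqrt x) = x ^ (1/4 : ℂ) := by
  have him : (log x * (1/2)).im = x.arg / 2 := by simp [log_im, div_eq_mul_inv]
  rw [csqrt, csqrt, ← cpow_mul _ (by rw [him]; linarith [neg_pi_lt_arg x, Real.pi_pos])
    (by rw [him]; linarith [arg_le_pi x, Real.pi_pos])]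
  norm_num

lemma csqrt_ofReal_sq_mul {A : ℝ} (hA : 0 < A) {x : ℂ} (hx : x ≠ 0) :
    csqrt ((A : ℂ) ^ 2 * x) = A * csqrt x := by
  have hA2 : (A : ℂ) ^ 2 = ((A ^ 2 : ℝ) : ℂ) := by push_cast; ring
  have harg : ((A : ℂ) ^ 2).arg + x.arg ∈ Ioc (-π) π := by
    rw [hA2, arg_ofReal_of_nonneg (sq_nonneg A), zero_add]
    exact ⟨neg_pi_lt_arg x, arg_le_pi x⟩
  have hsqrt : csqrt ((A : ℂ) ^ 2) = A := by
    rw [csqrt, hA2, show (1/2 : ℂ) = ((1/2 : ℝ) : ℂ) by norm_num, ← ofReal_cpow (sq_nonneg A),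
      ← Real.sqrt_eq_rpow, Real.sqrt_sq hA.le]
  rw [csqrt, mul_cpow_of_arg_add_mem (pow_ne_zero 2 (ofReal_ne_zero.mpr hA.ne')) hx harg,
    ← csqrt, ← csqrt, hsqrt]

lemma re_csqrt_pos {x : ℂ} (hx : x ∈ slitPlane) : 0 < (csqrt x).re := by
  rw [csqrt, cpow_def_of_ne_zero (slitPlane_ne_zero hx), exp_re]
  have him : (log x * (1/2)).im = x.arg / 2 := by simp [log_im, div_eq_mul_inv]
  have h1 := neg_pi_lt_arg x
  have h2 := (arg_le_pi x).lt_of_ne (slitPlane_arg_ne_pi hx)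
  rw [him]
  exact mul_pos (Real.exp_pos _) (Real.cos_pos_of_mem_Ioo ⟨by linarith, by linarith⟩)

lemma csqrt_mul_of_re_pos {x y : ℂ} (hx : 0 < x.re) (hy : 0 < y.re) :
    csqrt (x * y) = csqrt x * csqrt y := by
  have hx' := abs_lt.mp (abs_arg_lt_pi_div_two_iff.mpr (Or.inl hx))
  have hy' := abs_lt.mp (abs_arg_lt_pi_div_two_iff.mpr (Or.inl hy))
  exact mul_cpow_of_arg_add_mem (fun h => by simp [h] at hx) (fun h => by simp [h] at hy)
    ⟨by linarith, by linarith⟩ _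

lemma sB_neg_inv_sub_one {q : ℂ} (hq : 0 < q.re) :
    sB (1 / -q - 1) = I * csqrt (1 + q) / csqrt q := by
  have hq0 : q ≠ 0 := fun h => by simp [h] at hq
  have hw : -(1 / -q - 1) = (1 + q) * q⁻¹ := by field_simp; ring
  have hinv : 0 < q⁻¹.re := by
    rw [inv_re]; exact div_pos hq (normSq_pos.mpr hq0)
  rw [sB, hw, csqrt_mul_of_re_pos (by simp; linarith) hinv, csqrt, csqrt,
    inv_cpow _ _ (fun h => by linarith [(arg_eq_pi_iff.mp h).1]), ← csqrt, ← csqrt,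
    mul_div_assoc, div_eq_mul_inv]

lemma isBigO_smul_one_add_smul_sigma1 {α : Type*} {l : Filter α} {f g u : α → ℂ}
    (hf : f =O[l] u) (hg : g =O[l] u) :
    (fun x => f x • (1 : Matrix (Fin 2) (Fin 2) ℂ) + g x • sigma1) =O[l] u := by
  have hsmul {h : α → ℂ} (C : Matrix (Fin 2) (Fin 2) ℂ) : (fun x => h x • C) =O[l] h :=
    isBigO_of_le' l fun x => by rw [norm_smul, mul_comm]
  exact ((hsmul 1).trans hf).add ((hsmul sigma1).trans hg)

section BranchPoints

variable {A : ℝ} {l : ℂ}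

lemma re_mem_Ioo_of_notMem_SigmaSet (hl : l ∉ SigmaSet A) (him : l.im = 0) :
    l.re ∈ Ioo (-(1/A)) (1/A) := by
  by_contra h
  refine hl ⟨l.re, ?_, ext rfl (by simp [him])⟩
  rw [mem_Ioo, not_and_or, not_lt, not_lt] at h
  exact h.imp id id

lemma neg_mem_SigmaSet (hl : l ∈ SigmaSet A) : -l ∈ SigmaSet A := by
  obtain ⟨x, hx, rfl⟩ := hl
  refine ⟨-x, ?_, by push_cast; ring⟩
  rcases hx with hx | hx
  · exact Or.inr (by simp only [mem_Ici, mem_Iic] at hx ⊢; linarith)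
  · exact Or.inl (by simp only [mem_Ici, mem_Iic] at hx ⊢; linarith)

lemma tendsto_neg_nhdsWithin_notMem_SigmaSet :
    Tendsto Neg.neg (𝓝[{z | z ∉ SigmaSet A}] (-(1/(A:ℂ))))
      (𝓝[{z | z ∉ SigmaSet A}] (1/(A:ℂ))) := by
  refine tendsto_nhdsWithin_iff.mpr ⟨?_, ?_⟩
  · simpa using (continuous_neg.tendsto (-(1/(A:ℂ)))).mono_left nhdsWithin_le_nhds
  · filter_upwards [self_mem_nhdsWithin] with z hz
    exact fun h => hz (by simpa using neg_mem_SigmaSet h)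

lemma one_div_sub_mem_slitPlane (hl : l ∉ SigmaSet A) : 1/(A:ℂ) - l ∈ slitPlane := by
  rw [mem_slitPlane_iff]
  rcases eq_or_ne l.im 0 with him | him
  · left
    have := (re_mem_Ioo_of_notMem_SigmaSet hl him).2
    simp only [sub_re, div_ofReal_re, one_re]
    linarith
  · right; simpa using him

lemma one_div_sub_mul_one_div_add_mem_slitPlane (hl : l ∉ SigmaSet A) :
    (1/(A:ℂ) - l) * (1/(A:ℂ) + l) ∈ slitPlane := by
  rw [mem_slitPlane_iff]
  have hre : ((1/(A:ℂ) - l) * (1/(A:ℂ) + l)).re = (1/A)^2 - l.re^2 + l.im^2 := by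
    simp [← ofReal_one, ← ofReal_div]; ring
  have him : ((1/(A:ℂ) - l) * (1/(A:ℂ) + l)).im = -2 * l.re * l.im := by
    simp [← ofReal_one, ← ofReal_div]; ring
  rw [hre, him]
  rcases eq_or_ne l.im 0 with h | h
  · obtain ⟨h1, h2⟩ := re_mem_Ioo_of_notMem_SigmaSet hl h
    left
    rw [h]
    nlinarith [mul_pos (sub_pos.mpr h2) (neg_lt_iff_pos_add.mp h1)]
  rcases eq_or_ne l.re 0 with h' | h'
  · left; rw [h']; nlinarith [sq_pos_of_ne_zero h]
  · right; simp [h, h']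

lemma re_one_div_add_pos (hA : 0 < A) (hre : 0 < l.re) : 0 < (1/(A:ℂ) + l).re := by
  simp only [add_re, div_ofReal_re, one_re]
  positivity

noncomputable def qA (A : ℝ) (l : ℂ) : ℂ := A * csqrt ((1/(A:ℂ) - l) * (1/(A:ℂ) + l))

noncomputable def EA_coeff (A : ℝ) (l : ℂ) : ℂ :=
  ((Real.sqrt 2 : ℝ) : ℂ)⁻¹ * sB (1/(I * (A:ℂ) * kA A l) - 1)

noncomputable def EA_diag (A : ℝ) (l : ℂ) : ℂ := l * (A:ℂ) / (1 - I * (A:ℂ) * kA A l)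

lemma EA_eq_smul (A : ℝ) (l : ℂ) : EA A l = EA_coeff A l • (EA_diag A l • 1 + sigma1) := by
  ext i j
  fin_cases i <;> fin_cases j <;> simp [EA, EA_coeff, EA_diag, sigma1]

lemma kA_neg (A : ℝ) (l : ℂ) : kA A (-l) = kA A l := by
  rw [kA, kA, neg_sq]

lemma EA_neg_eq_smul (A : ℝ) (l : ℂ) :
    EA A (-l) = EA_coeff A l • (-EA_diag A l • 1 + sigma1) := by
  rw [EA_eq_smul, EA_coeff, EA_diag, EA_coeff, EA_diag, kA_neg, neg_mul, neg_div]

lemma I_mul_mul_kA (A : ℝ) (l : ℂ) : I * A * kA A l = -qA A l := by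
  rw [kA, qA, show 1/(A:ℂ)^2 - l^2 = (1/(A:ℂ) - l) * (1/(A:ℂ) + l) by ring]
  linear_combination (A:ℂ) * csqrt ((1/(A:ℂ) - l) * (1/(A:ℂ) + l)) * I_sq

lemma qA_re_pos (hA : 0 < A) (hl : l ∉ SigmaSet A) : 0 < (qA A l).re := by
  rw [qA, re_ofReal_mul]
  exact mul_pos hA (re_csqrt_pos (one_div_sub_mul_one_div_add_mem_slitPlane hl))

lemma one_add_qA_ne_zero (hA : 0 < A) (hl : l ∉ SigmaSet A) : 1 + qA A l ≠ 0 := fun h => by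
  have := congrArg re h
  simp only [add_re, one_re, zero_re] at this
  linarith [qA_re_pos hA hl]

lemma csqrt_one_add_qA_add_one_ne_zero (hA : 0 < A) (hl : l ∉ SigmaSet A) :
    csqrt (1 + qA A l) + 1 ≠ 0 := fun h => by
  have hpos : 0 < (csqrt (1 + qA A l)).re :=
    re_csqrt_pos (mem_slitPlane_iff.mpr (Or.inl (by simp; linarith [qA_re_pos hA hl])))
  have := congrArg re h
  simp only [add_re, one_re, zero_re] at this
  linarith

lemma EA_coeff_eq (hA : 0 < A) (hl : l ∉ SigmaSet A) :
    EA_coeff A l = I * csqrt (1 + qA A l) / (((Real.sqrt 2 : ℝ) : ℂ) * csqrt (qA A l)) := by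
  rw [EA_coeff, I_mul_mul_kA, sB_neg_inv_sub_one (qA_re_pos hA hl)]
  ring

lemma EA_diag_eq (A : ℝ) (l : ℂ) : EA_diag A l = l * A / (1 + qA A l) := by
  rw [EA_diag, I_mul_mul_kA, sub_neg_eq_add]

noncomputable def etaA (A : ℝ) (l : ℂ) : ℂ := (1/(A:ℂ) - l) ^ (1/4 : ℂ)

noncomputable def gammaA (A : ℝ) (l : ℂ) : ℂ := ((A:ℂ)^2 * (1/(A:ℂ) + l)) ^ (1/4 : ℂ)

noncomputable def aA (A : ℝ) : ℂ := (((2*A) ^ ((1:ℝ)/4) : ℝ) : ℂ)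

lemma csqrt_qA (hA : 0 < A) (hl : l ∉ SigmaSet A) (hre : 0 < l.re) :
    csqrt (qA A l) = gammaA A l * etaA A l := by
  have hε := one_div_sub_mem_slitPlane hl
  have hm := re_one_div_add_pos hA hre
  have hm0 : 1/(A:ℂ) + l ≠ 0 := fun h => by rw [h] at hm; simp at hm
  have hA2 : (A:ℂ)^2 = ((A^2 : ℝ) : ℂ) := by push_cast; ring
  have harg : ((A:ℂ)^2 * (1/(A:ℂ) + l)).arg + (1/(A:ℂ) - l).arg ∈ Ioc (-π) π := by
    rw [hA2, arg_real_mul _ (by positivity)]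
    refine arg_add_arg_mem_Ioc hm hε ?_
    simp only [add_im, sub_im, div_ofReal_im, one_im, zero_div, zero_add, zero_sub]
    nlinarith [sq_nonneg l.im]
  rw [qA, ← csqrt_ofReal_sq_mul hA (mul_ne_zero (slitPlane_ne_zero hε) hm0), csqrt_csqrt,
    show (A:ℂ)^2 * ((1/(A:ℂ) - l) * (1/(A:ℂ) + l))
      = ((A:ℂ)^2 * (1/(A:ℂ) + l)) * (1/(A:ℂ) - l) by ring,
    mul_cpow_of_arg_add_mem (mul_ne_zero (pow_ne_zero 2 (ofReal_ne_zero.mpr hA.ne')) hm0)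
      (slitPlane_ne_zero hε) harg]
  rfl

lemma qA_eq (hA : 0 < A) (hl : l ∉ SigmaSet A) (hre : 0 < l.re) :
    qA A l = (gammaA A l * etaA A l) ^ 2 := by
  rw [← csqrt_qA hA hl hre, csqrt_sq]

lemma etaA_pow_four (A : ℝ) (l : ℂ) : etaA A l ^ 4 = 1/(A:ℂ) - l :=
  cpow_one_div_four_pow_four _

lemma gammaA_pow_four (A : ℝ) (l : ℂ) : gammaA A l ^ 4 = (A:ℂ)^2 * (1/(A:ℂ) + l) :=
  cpow_one_div_four_pow_four _

lemma aA_pow_four (hA : 0 < A) : aA A ^ 4 = 2 * A := by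
  rw [aA, ← ofReal_pow, ← Real.rpow_natCast, ← Real.rpow_mul (by positivity)]
  norm_num

lemma aA_ne_zero (hA : 0 < A) : aA A ≠ 0 :=
  ofReal_ne_zero.mpr (Real.rpow_pos_of_pos (by positivity) _).ne'

lemma etaA_ne_zero (hl : l ∉ SigmaSet A) : etaA A l ≠ 0 := by
  rw [etaA, Ne, cpow_eq_zero_iff, not_and_or]
  exact Or.inl (slitPlane_ne_zero (one_div_sub_mem_slitPlane hl))

lemma gammaA_ne_zero (hA : 0 < A) (hre : 0 < l.re) : gammaA A l ≠ 0 := by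
  have hm := re_one_div_add_pos hA hre
  rw [gammaA, Ne, cpow_eq_zero_iff, not_and_or]
  exact Or.inl (mul_ne_zero (pow_ne_zero 2 (ofReal_ne_zero.mpr hA.ne'))
    fun h => by rw [h] at hm; simp at hm)

lemma norm_etaA (A : ℝ) (l : ℂ) : ‖etaA A l‖ = ‖l - 1/(A:ℂ)‖ ^ ((1:ℝ)/4) := by
  rw [etaA, show (1/4 : ℂ) = ((1/4 : ℝ) : ℂ) by norm_num, norm_cpow_real, ← norm_neg]
  norm_num

lemma nuMinus_neg (A : ℝ) (l : ℂ) : nuMinus A (-l) = etaA A l := by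
  rw [nuMinus, etaA, neg_add_eq_sub]

lemma exp_three_pi_I_div_four_div_nuPlus (A : ℝ) (l r : ℂ) :
    Complex.exp (3 * (Real.pi : ℂ) * I / 4) / (r * nuPlus A l) = I / (r * etaA A l) := by
  have hexp :
      Complex.exp (3 * (Real.pi : ℂ) * I / 4) = I * Complex.exp ((Real.pi : ℂ) * I / 4) := by
    rw [show 3 * (Real.pi : ℂ) * I / 4 = Real.pi / 2 * I + Real.pi * I / 4 by ring,
      Complex.exp_add, exp_pi_div_two_mul_I]
  rw [show nuPlus A l = Complex.exp ((Real.pi : ℂ) * I / 4) * etaA A l from rfl, hexp,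
    show r * (Complex.exp ((Real.pi : ℂ) * I / 4) * etaA A l)
      = Complex.exp ((Real.pi : ℂ) * I / 4) * (r * etaA A l) by ring, mul_comm I,
    mul_div_mul_left _ _ (Complex.exp_ne_zero _)]

lemma tendsto_etaA (A : ℝ) : Tendsto (etaA A) (𝓝 (1/(A:ℂ))) (𝓝 0) := by
  rw [tendsto_zero_iff_norm_tendsto_zero]
  simp_rw [norm_etaA]
  refine Tendsto.rpow_const_nhds_zero ?_ (by norm_num)
  simpa using ((continuous_id.sub continuous_const).norm.tendsto (1/(A:ℂ)) :
    Tendsto (fun l : ℂ => ‖l - 1/(A:ℂ)‖) _ _)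

lemma tendsto_gammaA (hA : 0 < A) : Tendsto (gammaA A) (𝓝 (1/(A:ℂ))) (𝓝 (aA A)) := by
  have h2A : (A:ℂ)^2 * (1/(A:ℂ) + 1/(A:ℂ)) = ((2 * A : ℝ) : ℂ) := by
    field_simp [ofReal_ne_zero.mpr hA.ne']; push_cast; ring
  have hlim : Tendsto (fun l : ℂ => (A:ℂ)^2 * (1/(A:ℂ) + l)) (𝓝 (1/(A:ℂ)))
      (𝓝 ((2 * A : ℝ) : ℂ)) := by
    rw [← h2A]; exact (by fun_prop : Continuous fun l : ℂ => (A:ℂ)^2 * (1/(A:ℂ) + l)).tendsto _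
  have := hlim.cpow (tendsto_const_nhds (x := (1/4 : ℂ))) (ofReal_mem_slitPlane.mpr (by positivity))
  rw [aA, ofReal_cpow (by positivity), ofReal_div, ofReal_one, ofReal_ofNat]
  exact this

lemma eventually_notMem_SigmaSet_and_re_pos (hA : 0 < A) :
    ∀ᶠ l in 𝓝[{z | z ∉ SigmaSet A}] (1/(A:ℂ)), l ∉ SigmaSet A ∧ 0 < l.re := by
  have hre : ∀ᶠ l : ℂ in 𝓝 (1/(A:ℂ)), 0 < l.re :=
    (continuous_re.tendsto _).eventually (lt_mem_nhds (by simp; positivity))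
  filter_upwards [self_mem_nhdsWithin, nhdsWithin_le_nhds hre] with l hl hl' using ⟨hl, hl'⟩

lemma tendsto_qA (hA : 0 < A) :
    Tendsto (qA A) (𝓝[{z | z ∉ SigmaSet A}] (1/(A:ℂ))) (𝓝 0) := by
  have hlim := ((tendsto_gammaA hA).mul (tendsto_etaA A)).pow 2
  rw [mul_zero, zero_pow two_ne_zero] at hlim
  refine (hlim.mono_left nhdsWithin_le_nhds).congr' ?_
  filter_upwards [eventually_notMem_SigmaSet_and_re_pos hA] with l ⟨hl, hre⟩
  exact (qA_eq hA hl hre).symm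

lemma tendsto_csqrt_one_add_qA (hA : 0 < A) :
    Tendsto (fun l => csqrt (1 + qA A l)) (𝓝[{z | z ∉ SigmaSet A}] (1/(A:ℂ))) (𝓝 1) := by
  have := (tendsto_const_nhds.add (tendsto_qA hA)).cpow (tendsto_const_nhds (x := (1/2 : ℂ)))
    (by simp : (1:ℂ) + 0 ∈ slitPlane)
  simpa [csqrt] using this

lemma isBigO_EA_coeff_sub (hA : 0 < A) :
    (fun l => EA_coeff A l - I / (((Real.sqrt 2 : ℝ) : ℂ) * aA A * etaA A l))
      =O[𝓝[{z | z ∉ SigmaSet A}] (1/(A:ℂ))] etaA A := by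
  have hγ := (tendsto_gammaA hA).mono_left (nhdsWithin_le_nhds (s := {z | z ∉ SigmaSet A}))
  have hη := (tendsto_etaA A).mono_left (nhdsWithin_le_nhds (s := {z | z ∉ SigmaSet A}))
  have hS := tendsto_csqrt_one_add_qA hA
  have ha := aA_ne_zero hA
  have hD1 : aA A + aA A ≠ 0 := by simpa [← two_mul] using ha
  have hD2 : aA A ^ 2 + aA A ^ 2 ≠ 0 := by simpa [← two_mul] using ha
  have hN := ((((hγ.pow 2).const_mul (aA A)).div (hS.add_const 1) (by norm_num)).add
    (((hη.pow 2).const_mul ((A:ℂ)^2)).div ((hγ.const_add (aA A)).mul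
      ((hγ.pow 2).const_add (aA A ^ 2))) (mul_ne_zero hD1 hD2))).const_mul I |>.div
    ((hγ.const_mul ((Real.sqrt 2 : ℝ) : ℂ)).mul_const (aA A)) (by simp [ha])
  refine isBigO_of_eventuallyEq_mul ?_ hN
  filter_upwards [eventually_notMem_SigmaSet_and_re_pos hA,
    (hγ.const_add (aA A)).eventually_ne hD1, ((hγ.pow 2).const_add (aA A ^ 2)).eventually_ne hD2]
    with l ⟨hl, hre⟩ hD1 hD2
  have hq := qA_eq hA hl hre
  have hS2 : csqrt (1 + qA A l) ^ 2 = 1 + qA A l := csqrt_sq _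
  have hγ0 := gammaA_ne_zero hA hre
  have hη0 := etaA_ne_zero hl
  have hS1 := csqrt_one_add_qA_add_one_ne_zero hA hl
  have h4 : aA A ^ 4 - gammaA A l ^ 4 = A^2 * etaA A l ^ 4 := by
    rw [aA_pow_four hA, gammaA_pow_four, etaA_pow_four]
    field_simp [ofReal_ne_zero.mpr hA.ne']
    ring
  rw [EA_coeff_eq hA hl, csqrt_qA hA hl hre]
  simp only [Pi.div_apply]
  field_simp
  -- `√(1+q) - 1 = q / (√(1+q) + 1)` and `a - γ = (a⁴ - γ⁴) / ((a + γ)(a² + γ²))`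
  linear_combination (aA A * ((aA A + gammaA A l) * (aA A ^ 2 + gammaA A l ^ 2))) * (hS2 + hq)
    + (csqrt (1 + qA A l) + 1) * h4

lemma isBigO_EA_coeff_mul_diag_sub_one (hA : 0 < A) :
    (fun l => EA_coeff A l * (EA_diag A l - 1))
      =O[𝓝[{z | z ∉ SigmaSet A}] (1/(A:ℂ))] etaA A := by
  have hγ := (tendsto_gammaA hA).mono_left (nhdsWithin_le_nhds (s := {z | z ∉ SigmaSet A}))
  have hη := (tendsto_etaA A).mono_left (nhdsWithin_le_nhds (s := {z | z ∉ SigmaSet A}))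
  have hN := ((((tendsto_csqrt_one_add_qA hA).const_mul I).mul
    (((hη.pow 2).const_mul (A:ℂ)).add (hγ.pow 2))).div
    ((hγ.const_mul ((Real.sqrt 2 : ℝ) : ℂ)).mul ((tendsto_qA hA).const_add 1))
    (by simp [aA_ne_zero hA])).neg
  refine isBigO_of_eventuallyEq_mul ?_ hN
  filter_upwards [eventually_notMem_SigmaSet_and_re_pos hA] with l ⟨hl, hre⟩
  have hq := qA_eq hA hl hre
  have hγ0 := gammaA_ne_zero hA hre
  have hη0 := etaA_ne_zero hl
  have hq1 := one_add_qA_ne_zero hA hl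
  have hη4 := etaA_pow_four A l
  have hA0 : (A:ℂ) ≠ 0 := ofReal_ne_zero.mpr hA.ne'
  rw [EA_coeff_eq hA hl, csqrt_qA hA hl hre, EA_diag_eq]
  simp only [Pi.div_apply]
  field_simp
  -- `λA - 1 - q = -η²(Aη² + γ²)`
  linear_combination csqrt (1 + qA A l) * A * hη4 - csqrt (1 + qA A l) * hq
    + csqrt (1 + qA A l) * mul_inv_cancel₀ hA0

lemma isBigO_EA_coeff_mul_diag_sub (hA : 0 < A) :
    (fun l => EA_coeff A l * EA_diag A l - I / (((Real.sqrt 2 : ℝ) : ℂ) * aA A * etaA A l))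
      =O[𝓝[{z | z ∉ SigmaSet A}] (1/(A:ℂ))] etaA A :=
  ((isBigO_EA_coeff_sub hA).add (isBigO_EA_coeff_mul_diag_sub_one hA)).congr_left
    fun l => by ring

end BranchPoints

/-- E_A has fourth-root singularities at the branch points ±1/A,
with the stated leading behaviour. -/
theorem stmt_12 (A : ℝ) (hA : 0 < A) :
    ((fun l : ℂ => EA A l -
        (Complex.exp (3 * (Real.pi : ℂ) * Complex.I / 4) /
          (((Real.sqrt 2 : ℝ) : ℂ) * (((2*A) ^ ((1:ℝ)/4) : ℝ) : ℂ) * nuPlus A l)) •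
          !![(1:ℂ), 1; 1, 1])
      =O[nhdsWithin (1/(A:ℂ)) {z : ℂ | z ∉ SigmaSet A}]
        (fun l : ℂ => ‖l - 1/(A:ℂ)‖ ^ ((1:ℝ)/4))) ∧
    ((fun l : ℂ => EA A l -
        (Complex.I /
          (((Real.sqrt 2 : ℝ) : ℂ) * (((2*A) ^ ((1:ℝ)/4) : ℝ) : ℂ) * nuMinus A l)) •
          !![(-1:ℂ), 1; 1, -1])
      =O[nhdsWithin (-(1/(A:ℂ))) {z : ℂ | z ∉ SigmaSet A}]
        (fun l : ℂ => ‖l + 1/(A:ℂ)‖ ^ ((1:ℝ)/4))) := by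
  have hJ : !![(1:ℂ), 1; 1, 1] = 1 + sigma1 := by
    ext i j; fin_cases i <;> fin_cases j <;> simp [sigma1]
  have hJ' : !![(-1:ℂ), 1; 1, -1] = -1 + sigma1 := by
    ext i j; fin_cases i <;> fin_cases j <;> simp [sigma1]
  have hη : etaA A =O[𝓝[{z | z ∉ SigmaSet A}] (1/(A:ℂ))] fun l => ‖l - 1/(A:ℂ)‖ ^ ((1:ℝ)/4) :=
    isBigO_of_le _ fun l => by rw [norm_etaA, Real.norm_of_nonneg (by positivity)]
  have hcoeff := isBigO_EA_coeff_sub hA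
  have hdiag := isBigO_EA_coeff_mul_diag_sub hA
  constructor
  · refine ((isBigO_smul_one_add_smul_sigma1 hdiag hcoeff).trans hη).congr_left fun l => ?_
    rw [EA_eq_smul, hJ, exp_three_pi_I_div_four_div_nuPlus, ← aA]
    module
  · refine (((isBigO_smul_one_add_smul_sigma1 hdiag.neg_left hcoeff).trans hη).comp_tendsto
      tendsto_neg_nhdsWithin_notMem_SigmaSet).congr (fun l => ?_) (fun l => ?_)
    · rw [Function.comp_apply, ← neg_neg l, EA_neg_eq_smul, nuMinus_neg, hJ', neg_neg, ← aA]
      module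
    · rw [Function.comp_apply, show -l - 1/(A:ℂ) = -(l + 1/(A:ℂ)) by ring, norm_neg]
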